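/- For real numbers ρ and ρ₀ with ρ₀ > 0 and ρ ≠ 1, one has (ρ₀/π) ∫_{-∞}^{∞} ln(|1 - ρ + i t|) / (ρ₀² + t²) dt = ln(|1 - ρ| + ρ₀). -/

import Mathlib

/-!
Put `F(a) = ∫ log (a² + t²) / (b² + t²) dt` for fixed `b > 0`. Differentiating under the
integral sign and splitting into partial fractions,
`F'(a) = 2a ∫ dt / ((a² + t²)(b² + t²)) = 2π / (b (a + b))` for every `a > 0` except `a = b`,
a single point that the fundamental theorem of calculus does not see. Hence
`F(a) - (2π / b) log (a + b)` is constant on `(0, ∞)`. Written as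
`∫ log ((a² + t²) / (a + b)²) / (b² + t²) dt`, it tends to `0` as `a → ∞` by dominated
convergence, so `F(a) = (2π / b) log (a + b)`. The theorem is the case `a = |1 - ρ|`, `b = ρ₀`,
because `log |1 - ρ + i t| = ½ log ((1 - ρ)² + t²)`.
-/

open MeasureTheory Real Set Filter Topology Asymptotics

lemma inv_sq_add_sq_eq {c : ℝ} (hc : c ≠ 0) (t : ℝ) :
    (c ^ 2 + t ^ 2)⁻¹ = (c ^ 2)⁻¹ * (1 + (t / c) ^ 2)⁻¹ := by
  rw [← mul_inv]; field_simp

lemma integrable_inv_sq_add_sq {c : ℝ} (hc : c ≠ 0) :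
    Integrable fun t : ℝ => (c ^ 2 + t ^ 2)⁻¹ := by
  simp_rw [inv_sq_add_sq_eq hc]
  exact (integrable_inv_one_add_sq.comp_div hc).const_mul _

lemma integral_univ_inv_sq_add_sq {c : ℝ} (hc : c ≠ 0) :
    ∫ t : ℝ, (c ^ 2 + t ^ 2)⁻¹ = π / |c| := by
  simp_rw [inv_sq_add_sq_eq hc]
  rw [integral_const_mul, Measure.integral_comp_div (fun x : ℝ => (1 + x ^ 2)⁻¹) c,
    integral_univ_inv_one_add_sq, smul_eq_mul, ← sq_abs c]
  field_simp

lemma integral_inv_sq_add_sq_mul_inv_sq_add_sq {a b : ℝ} (ha : 0 < a) (hb : 0 < b) (hab : a ≠ b) :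
    ∫ t : ℝ, (a ^ 2 + t ^ 2)⁻¹ * (b ^ 2 + t ^ 2)⁻¹ = π / (a * b * (a + b)) := by
  have hba : b - a ≠ 0 := sub_ne_zero.2 hab.symm
  have hab' : b ^ 2 - a ^ 2 ≠ 0 := by rw [sq_sub_sq]; exact mul_ne_zero (by positivity) hba
  have hsplit : ∀ t : ℝ, (a ^ 2 + t ^ 2)⁻¹ * (b ^ 2 + t ^ 2)⁻¹
      = (b ^ 2 - a ^ 2)⁻¹ * ((a ^ 2 + t ^ 2)⁻¹ - (b ^ 2 + t ^ 2)⁻¹) := fun t => by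
    field_simp; ring
  simp_rw [hsplit]
  rw [integral_const_mul, integral_sub (integrable_inv_sq_add_sq ha.ne')
    (integrable_inv_sq_add_sq hb.ne'), integral_univ_inv_sq_add_sq ha.ne',
    integral_univ_inv_sq_add_sq hb.ne', abs_of_pos ha, abs_of_pos hb, sq_sub_sq]
  field_simp
  ring

lemma isBigO_log_sq_add_sq_rpow (a : ℝ) :
    (fun t : ℝ => log (a ^ 2 + t ^ 2)) =O[atTop] fun t => t ^ (1 / 2 : ℝ) := by
  have h : (fun t : ℝ => log (a ^ 2 + t ^ 2)) =O[atTop] fun t => (a ^ 2 + t ^ 2) ^ (1 / 4 : ℝ) :=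
    ((isLittleO_log_rpow_atTop (by norm_num)).comp_tendsto
      (tendsto_atTop_add_const_left _ _ (tendsto_pow_atTop two_ne_zero))).isBigO
  refine h.trans (IsBigO.of_bound (2 ^ (1 / 2 : ℝ)) ?_)
  filter_upwards [eventually_ge_atTop |a|] with t hat
  have ht : 0 ≤ t := (abs_nonneg a).trans hat
  rw [norm_of_nonneg (by positivity), norm_of_nonneg (by positivity)]
  calc (a ^ 2 + t ^ 2) ^ (1 / 4 : ℝ) ≤ ((2 * t) ^ 2) ^ (1 / 4 : ℝ) := by
        gcongr; nlinarith [sq_abs a, mul_self_le_mul_self (abs_nonneg a) hat]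
    _ = 2 ^ (1 / 2 : ℝ) * t ^ (1 / 2 : ℝ) := by
        rw [← rpow_natCast, ← rpow_mul (by positivity), mul_rpow zero_le_two ht]; norm_num

lemma isBigO_inv_sq_add_sq_rpow (b : ℝ) :
    (fun t : ℝ => (b ^ 2 + t ^ 2)⁻¹) =O[atTop] fun t => t ^ (-2 : ℝ) := by
  refine IsBigO.of_bound 1 ?_
  filter_upwards [eventually_gt_atTop 0] with t ht
  rw [norm_of_nonneg (by positivity), norm_of_nonneg (by positivity), one_mul, rpow_neg ht.le,
    rpow_two]
  gcongr; nlinarith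

lemma integrable_log_sq_add_sq_mul_inv {a b : ℝ} (ha : a ≠ 0) (hb : b ≠ 0) :
    Integrable fun t : ℝ => log (a ^ 2 + t ^ 2) * (b ^ 2 + t ^ 2)⁻¹ := by
  have hcont : Continuous fun t : ℝ => log (a ^ 2 + t ^ 2) * (b ^ 2 + t ^ 2)⁻¹ := by
    fun_prop (disch := intro; positivity)
  refine hcont.locallyIntegrable.integrable_of_isBigO_atTop_of_norm_isNegInvariant
    (g := fun t => t ^ (-3 / 2 : ℝ)) (.of_forall fun t => by simp) ?_
    (integrableAtFilter_rpow_atTop_iff.mpr (by norm_num))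
  refine ((isBigO_log_sq_add_sq_rpow a).mul (isBigO_inv_sq_add_sq_rpow b)).trans_eventuallyEq ?_
  filter_upwards [eventually_gt_atTop 0] with t ht
  rw [← rpow_add ht]; norm_num

noncomputable def poissonLogIntegral (b a : ℝ) : ℝ :=
  ∫ t : ℝ, log (a ^ 2 + t ^ 2) * (b ^ 2 + t ^ 2)⁻¹

lemma hasDerivAt_poissonLogIntegral {a b : ℝ} (ha : a ≠ 0) (hb : b ≠ 0) :
    HasDerivAt (poissonLogIntegral b)
      (2 * a * ∫ t : ℝ, (a ^ 2 + t ^ 2)⁻¹ * (b ^ 2 + t ^ 2)⁻¹) a := by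
  have ha' : 0 < |a| := abs_pos.mpr ha
  have hball : Metric.ball a (|a| / 2) ∈ 𝓝 a := Metric.ball_mem_nhds a (half_pos ha')
  have hne : ∀ x ∈ Metric.ball a (|a| / 2), x ≠ 0 := fun x hx h => by
    rw [Metric.mem_ball, h, dist_zero_left, norm_eq_abs] at hx; linarith
  have hmain := hasDerivAt_integral_of_dominated_loc_of_deriv_le (μ := volume)
    (F := fun x t => log (x ^ 2 + t ^ 2) * (b ^ 2 + t ^ 2)⁻¹)
    (F' := fun x t => 2 * x * ((x ^ 2 + t ^ 2)⁻¹ * (b ^ 2 + t ^ 2)⁻¹))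
    (bound := fun t => 4 / |a| * (b ^ 2 + t ^ 2)⁻¹) hball
    (Filter.mem_of_superset hball fun x hx =>
      (integrable_log_sq_add_sq_mul_inv (hne x hx) hb).aestronglyMeasurable)
    (integrable_log_sq_add_sq_mul_inv ha hb)
    (by fun_prop (disch := intro; positivity)) ?_ ((integrable_inv_sq_add_sq hb).const_mul _) ?_
  · unfold poissonLogIntegral
    simpa only [integral_const_mul] using hmain.2
  · refine .of_forall fun t x hx => ?_
    have hxt : 0 < x ^ 2 + t ^ 2 := by positivity [hne x hx]
    have hax : |a| / 2 < |x| := by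
      rw [Metric.mem_ball, dist_comm, dist_eq_norm, norm_eq_abs] at hx
      linarith [abs_sub_abs_le_abs_sub a x]
    rw [← mul_assoc, norm_mul, norm_of_nonneg (by positivity : (0 : ℝ) ≤ (b ^ 2 + t ^ 2)⁻¹)]
    gcongr
    rw [norm_mul, norm_mul, norm_two, norm_inv, norm_of_nonneg hxt.le, norm_eq_abs,
      ← div_eq_mul_inv, div_le_div_iff₀ hxt ha']
    nlinarith [sq_abs x, sq_nonneg t, abs_nonneg x]
  · refine .of_forall fun t x hx => ?_
    have := (((hasDerivAt_pow 2 x).add_const (t ^ 2)).log (by positivity [hne x hx])).mul_const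
      ((b ^ 2 + t ^ 2)⁻¹)
    exact this.congr_deriv (by norm_num; ring)

lemma poissonLogIntegral_sub_log_eq {b x y : ℝ} (hb : 0 < b) (hx : 0 < x) (hy : 0 < y) :
    poissonLogIntegral b x - 2 * π / b * log (x + b)
      = poissonLogIntegral b y - 2 * π / b * log (y + b) := by
  set G' := fun z : ℝ => 2 * z * (∫ t : ℝ, (z ^ 2 + t ^ 2)⁻¹ * (b ^ 2 + t ^ 2)⁻¹)
    - 2 * π / b * (z + b)⁻¹
  have hderiv : ∀ z ∈ uIcc x y, HasDerivAt
      (fun z => poissonLogIntegral b z - 2 * π / b * log (z + b)) (G' z) z := fun z hz => by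
    have hz : 0 < z := lt_of_lt_of_le (lt_min hx hy) hz.1
    exact (hasDerivAt_poissonLogIntegral hz.ne' hb.ne').sub
      ((((hasDerivAt_id z).add_const b).log (by positivity)).const_mul _ |>.congr_deriv (by simp))
  have hG' : ∀ᵐ z, z ∈ uIoc x y → G' z = 0 := by
    filter_upwards [volume.ae_ne b] with z hzb hz
    have hz : 0 < z := lt_of_lt_of_le (lt_min hx hy) hz.1.le
    simp only [G', integral_inv_sq_add_sq_mul_inv_sq_add_sq hz hb hzb]
    field_simp
    ring
  have hint := intervalIntegral.integral_eq_sub_of_hasDerivAt hderiv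
    ((intervalIntegrable_congr_ae ((ae_restrict_iff' measurableSet_uIoc).2 hG')).2
      intervalIntegrable_const)
  rw [intervalIntegral.integral_congr_ae hG', intervalIntegral.integral_zero] at hint
  linarith

lemma poissonLogIntegral_sub_log_eq_integral {b y : ℝ} (hb : 0 < b) (hy : 0 < y) :
    poissonLogIntegral b y - 2 * π / b * log (y + b)
      = ∫ t : ℝ, log ((y ^ 2 + t ^ 2) / (y + b) ^ 2) * (b ^ 2 + t ^ 2)⁻¹ := by
  have hsplit : ∀ t : ℝ, log ((y ^ 2 + t ^ 2) / (y + b) ^ 2) * (b ^ 2 + t ^ 2)⁻¹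
      = log (y ^ 2 + t ^ 2) * (b ^ 2 + t ^ 2)⁻¹ - 2 * log (y + b) * (b ^ 2 + t ^ 2)⁻¹ := fun t => by
    rw [log_div (by positivity) (by positivity), log_pow]; push_cast; ring
  simp_rw [hsplit]
  rw [integral_sub (integrable_log_sq_add_sq_mul_inv hy.ne' hb.ne')
    ((integrable_inv_sq_add_sq hb.ne').const_mul _), integral_const_mul,
    integral_univ_inv_sq_add_sq hb.ne', abs_of_pos hb, poissonLogIntegral]
  ring

lemma abs_log_sq_add_sq_div_sq_le {b y : ℝ} (t : ℝ) (hb : 0 < b) (hy : 1 ≤ y) (hby : b ≤ y) :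
    |log ((y ^ 2 + t ^ 2) / (y + b) ^ 2)| ≤ log (1 + t ^ 2) + log 4 := by
  have hlog4 : 0 ≤ log 4 := log_nonneg (by norm_num)
  have hlog : 0 ≤ log (1 + t ^ 2) := log_nonneg (by nlinarith)
  have hlower : log (1 / 4) ≤ log ((y ^ 2 + t ^ 2) / (y + b) ^ 2) := by
    apply log_le_log (by norm_num)
    rw [le_div_iff₀ (by positivity)]
    nlinarith
  have hupper : log ((y ^ 2 + t ^ 2) / (y + b) ^ 2) ≤ log (1 + t ^ 2) := by
    apply log_le_log (by positivity)
    rw [div_le_iff₀ (by positivity)]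
    have h1 : 1 ≤ (y + b) ^ 2 := by nlinarith
    nlinarith [mul_le_mul_of_nonneg_left h1 (sq_nonneg t)]
  rw [one_div, log_inv] at hlower
  exact abs_le.2 ⟨by linarith, by linarith⟩

lemma tendsto_integral_log_div_sq {b : ℝ} (hb : 0 < b) :
    Tendsto (fun y : ℝ => ∫ t : ℝ, log ((y ^ 2 + t ^ 2) / (y + b) ^ 2) * (b ^ 2 + t ^ 2)⁻¹)
      atTop (𝓝 0) := by
  rw [← integral_zero ℝ ℝ]
  refine tendsto_integral_filter_of_dominated_convergence
    (fun t => (log (1 + t ^ 2) + log 4) * (b ^ 2 + t ^ 2)⁻¹) ?_ ?_ ?_ ?_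
  · filter_upwards [eventually_gt_atTop 0] with y hy
    exact Continuous.aestronglyMeasurable (by fun_prop (disch := intro; positivity))
  · filter_upwards [eventually_ge_atTop 1, eventually_ge_atTop b] with y hy1 hyb
    refine .of_forall fun t => ?_
    rw [norm_mul, norm_of_nonneg (by positivity : (0 : ℝ) ≤ (b ^ 2 + t ^ 2)⁻¹), norm_eq_abs]
    gcongr
    exact abs_log_sq_add_sq_div_sq_le t hb hy1 hyb
  · simp_rw [add_mul]
    have h1 := integrable_log_sq_add_sq_mul_inv one_ne_zero hb.ne'
    rw [one_pow] at h1
    exact h1.add ((integrable_inv_sq_add_sq hb.ne').const_mul _)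
  · refine .of_forall fun t => ?_
    have hq : Tendsto (fun y : ℝ => (1 + (t / y) ^ 2) / (1 + b / y) ^ 2) atTop (𝓝 1) := by
      have h0 : ∀ c : ℝ, Tendsto (fun y : ℝ => c / y) atTop (𝓝 0) := fun c =>
        tendsto_const_nhds.div_atTop tendsto_id
      have := (tendsto_const_nhds (x := (1 : ℝ)).add ((h0 t).pow 2)).div
        ((tendsto_const_nhds (x := (1 : ℝ)).add (h0 b)).pow 2) (by norm_num)
      simpa [Pi.div_def] using this
    have hlog := ((continuousAt_log one_ne_zero).tendsto.comp hq).mul_const ((b ^ 2 + t ^ 2)⁻¹)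
    rw [log_one, zero_mul] at hlog
    refine hlog.congr' ?_
    filter_upwards [eventually_gt_atTop 0] with y hy
    simp only [Function.comp]
    congr 2
    field_simp

theorem poissonLogIntegral_eq {a b : ℝ} (ha : 0 < a) (hb : 0 < b) :
    poissonLogIntegral b a = 2 * π / b * log (a + b) := by
  have hconst : ∀ᶠ y in atTop, poissonLogIntegral b a - 2 * π / b * log (a + b)
      = ∫ t : ℝ, log ((y ^ 2 + t ^ 2) / (y + b) ^ 2) * (b ^ 2 + t ^ 2)⁻¹ := by
    filter_upwards [eventually_gt_atTop 0] with y hy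
    rw [poissonLogIntegral_sub_log_eq hb ha hy, poissonLogIntegral_sub_log_eq_integral hb hy]
  have hzero := tendsto_nhds_unique
    (tendsto_const_nhds.congr' hconst) (tendsto_integral_log_div_sq hb)
  linarith

theorem poisson_log_abs_linear (ρ ρ₀ : ℝ) (hρ₀ : 0 < ρ₀) (hρ : ρ ≠ 1) :
    (ρ₀ / π) * ∫ t : ℝ, Real.log ‖((1 : ℂ) - ρ + t * Complex.I)‖ / (ρ₀ ^ 2 + t ^ 2)
      = Real.log (|1 - ρ| + ρ₀) := by
  have ha : 0 < |1 - ρ| := abs_pos.2 (sub_ne_zero.2 hρ.symm)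
  have hintegrand : ∀ t : ℝ, Real.log ‖((1 : ℂ) - ρ + t * Complex.I)‖ / (ρ₀ ^ 2 + t ^ 2)
      = 2⁻¹ * (Real.log (|1 - ρ| ^ 2 + t ^ 2) * (ρ₀ ^ 2 + t ^ 2)⁻¹) := fun t => by
    rw [← Complex.ofReal_one, ← Complex.ofReal_sub, Complex.norm_add_mul_I,
      Real.log_sqrt (by positivity), sq_abs]
    ring
  simp_rw [hintegrand]
  rw [integral_const_mul, ← poissonLogIntegral, poissonLogIntegral_eq ha hρ₀]
  field_simp
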